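/- arXiv:1404.2528 — 4 statements merged into one kernel-verified Lean document; each statement's English description precedes it below -/
import Mathlib

section
/- Let C be a small category and L = Ind(C) its free completion under directed colimits. If K is a category with directed colimits and the inclusion C → K is the restriction of a functor F : L → K preserving directed colimits that is the identity on C, and all morphisms of K are monomorphisms, then F is faithful. -/
/-!
Morphisms of `Ind C` are separated by representables, so it suffices to show that `F` is
injective on morphisms `p q : Ind.yoneda.obj c ⟶ Y`. Since the representables over `Y` form a
filtered category, `p` and `q` factor as `Ind.yoneda.map u ≫ s` and `Ind.yoneda.map v ≫ s`
through a common `s : Ind.yoneda.obj d ⟶ Y`. As `F.map s` is a monomorphism, `F.map p = F.map q`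
forces `F.map (Ind.yoneda.map u) = F.map (Ind.yoneda.map v)`, hence `u = v` because `F` restricts
to a faithful functor on `C`.
-/

open CategoryTheory Limits

universe u u₂

-- Transported from the filteredness of `CostructuredArrow yoneda ((Ind.inclusion C).obj Y)`.
instance Ind.isFiltered_costructuredArrow_yoneda {C : Type u} [SmallCategory C] (Y : Ind C) :
    IsFiltered (CostructuredArrow Ind.yoneda Y) :=
  have := (Ind.isIndObject_inclusion_obj Y).isFiltered
  IsFiltered.of_equivalence ((CostructuredArrow.mapNatIso Ind.yonedaCompInclusion).symm.trans
    (CostructuredArrow.post Ind.yoneda (Ind.inclusion C) Y).asEquivalence.symm)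

theorem Ind.exists_yoneda_map_comp_eq {C : Type u} [SmallCategory C] {Y : Ind C} {c c' : C}
    (p : Ind.yoneda.obj c ⟶ Y) (q : Ind.yoneda.obj c' ⟶ Y) :
    ∃ (d : C) (s : Ind.yoneda.obj d ⟶ Y) (u : c ⟶ d) (v : c' ⟶ d),
      Ind.yoneda.map u ≫ s = p ∧ Ind.yoneda.map v ≫ s = q := by
  obtain ⟨Z, u, v, -⟩ :=
    IsFilteredOrEmpty.cocone_objs (CostructuredArrow.mk p) (CostructuredArrow.mk q)
  exact ⟨Z.left, Z.hom, u.left, v.left, CostructuredArrow.w u, CostructuredArrow.w v⟩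

theorem Ind.map_injective_of_faithful_yoneda_comp {C : Type u} [SmallCategory C]
    {D : Type u₂} [Category.{u} D] (F : Ind C ⥤ D) [(Ind.yoneda ⋙ F).Faithful]
    (hmono : ∀ {c : C} {Y : Ind C} (s : Ind.yoneda.obj c ⟶ Y), Mono (F.map s))
    {c : C} {Y : Ind C} {p q : Ind.yoneda.obj c ⟶ Y} (h : F.map p = F.map q) : p = q := by
  obtain ⟨d, s, u, v, rfl, rfl⟩ := Ind.exists_yoneda_map_comp_eq p q
  have := hmono s
  rw [F.map_comp, F.map_comp, cancel_mono] at h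
  rw [(Ind.yoneda ⋙ F).map_injective h]

theorem Ind.faithful_of_faithful_yoneda_comp {C : Type u} [SmallCategory C]
    {D : Type u₂} [Category.{u} D] (F : Ind C ⥤ D) [(Ind.yoneda ⋙ F).Faithful]
    (hmono : ∀ {c : C} {Y : Ind C} (s : Ind.yoneda.obj c ⟶ Y), Mono (F.map s)) :
    F.Faithful where
  map_injective {_ _} f g h := Ind.isSeparating_range_yoneda f g <| by
    rintro _ ⟨c⟩ x
    exact Ind.map_injective_of_faithful_yoneda_comp F hmono (by rw [F.map_comp, F.map_comp, h])

theorem stmt2_general (C : Type u) [SmallCategory C] (K : Type u₂) [Category.{u} K]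
    (hmono : ∀ {A B : K} (f : A ⟶ B), Mono f)
    (ι : C ⥤ K) (hfaith : ι.Faithful)
    (F : Ind C ⥤ K)
    (he : Ind.yoneda ⋙ F ≅ ι) :
    F.Faithful :=
  have := Functor.Faithful.of_iso he.symm
  Ind.faithful_of_faithful_yoneda_comp F fun s => hmono (F.map s)

/-- Let `C` be a small category and `L = Ind C` its free completion under directed colimits.
If `K` is a category with directed colimits whose morphisms are all monomorphisms, and
`F : Ind C ⥤ K` preserves directed colimits and restricts along `Ind.yoneda` to the (fully
faithful) inclusion `ι : C ⥤ K` of `C` as a full subcategory of `K` (i.e. `F` is the identity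
on `C`), then `F` is faithful. -/
theorem stmt2 (C : Type u) [SmallCategory C] (K : Type u₂) [Category.{u} K]
    (hdirK : ∀ (J : Type u) [Preorder J], Nonempty J → IsDirected J (· ≤ ·) →
      HasColimitsOfShape J K)
    (hmono : ∀ {A B : K} (f : A ⟶ B), Mono f)
    (ι : C ⥤ K) (hfull : ι.Full) (hfaith : ι.Faithful)
    (F : Ind C ⥤ K)
    (hF : ∀ (J : Type u) [Preorder J], Nonempty J → IsDirected J (· ≤ ·) →
      Nonempty (PreservesColimitsOfShape J F))
    (he : Ind.yoneda ⋙ F ≅ ι) :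
    F.Faithful :=
  stmt2_general C K hmono ι hfaith F he
end

section
/- Any abstract elementary class, regarded as a category with substructure embeddings as morphisms together with the underlying-set functor, is a coherent accessible category with concrete directed colimits. -/
open CategoryTheory Limits Opposite

universe u u₂ u₃

/-- A preorder is `κ`-directed if every subset of cardinality `< κ` has an upper bound. -/
def IsCardDirected (κ : Cardinal.{u}) (J : Type u) [Preorder J] : Prop :=
  ∀ S : Set J, Cardinal.mk S < κ → ∃ b, ∀ a ∈ S, a ≤ b

/-- An object `K` is `κ`-presentable if its hom-functor preserves `κ`-directed colimits. -/
def IsPresentable (κ : Cardinal.{u}) {C : Type u₂} [Category.{u} C] (K : C) : Prop :=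
  ∀ (J : Type u) [Preorder J], IsCardDirected κ J →
    Nonempty (PreservesColimitsOfShape J (coyoneda.obj (op K)))

/-- A category has (all) directed colimits. -/
def HasDirectedColimits (C : Type u₂) [Category.{u} C] : Prop :=
  ∀ (J : Type u) [Preorder J], IsCardDirected Cardinal.aleph0 J → HasColimitsOfShape J C

/-- A presentation of `X` as a `κ`-directed colimit of objects from `S`. -/
structure DirectedColimitPresentation (κ : Cardinal.{u}) {C : Type u₂} [Category.{u} C]
    (S : Set C) (X : C) where
  J : Type u
  [inst : Preorder J]
  directed : IsCardDirected κ J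
  D : J ⥤ C
  mem : ∀ j, D.obj j ∈ S
  cocone : Cocone D
  isColimit : IsColimit cocone
  iso : cocone.pt ≅ X

attribute [instance] DirectedColimitPresentation.inst

/-- `C` is a `κ`-accessible category. -/
structure IsAccessible (κ : Cardinal.{u}) (C : Type u₂) [Category.{u} C] : Prop where
  hasColimits : ∀ (J : Type u) [Preorder J], IsCardDirected κ J → HasColimitsOfShape J C
  generators : ∃ S : Set C, (∀ A ∈ S, IsPresentable κ A) ∧
    ∀ X : C, Nonempty (DirectedColimitPresentation κ S X)

/-- A functor preserves (all) directed colimits. -/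
def PreservesDirectedColimits {C : Type u₂} [Category.{u} C] {D : Type u₃} [Category.{u} D]
    (F : C ⥤ D) : Prop :=
  ∀ (J : Type u) [Preorder J], IsCardDirected Cardinal.aleph0 J →
    Nonempty (PreservesColimitsOfShape J F)

/-- Coherence of a concrete structure functor `U`. -/
def Coherent {C : Type u₂} [Category.{u} C] (U : C ⥤ Type u) : Prop :=
  ∀ {A B Z : C} (h : A ⟶ Z) (g : B ⟶ Z) (f : U.obj A → U.obj B),
    U.map g ∘ f = U.map h → ∃ fbar : A ⟶ B, U.map fbar = f

/-- Equivalence of types `(f₀,a₀)` and `(f₁,a₁)` over `M`. -/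
def TypesEquiv {C : Type u₂} [Category.{u} C] (U : C ⥤ Type u) {M N₀ N₁ : C}
    (f₀ : M ⟶ N₀) (a₀ : U.obj N₀) (f₁ : M ⟶ N₁) (a₁ : U.obj N₁) : Prop :=
  ∃ (N : C) (h₀ : N₀ ⟶ N) (h₁ : N₁ ⟶ N),
    f₀ ≫ h₀ = f₁ ≫ h₁ ∧ U.map h₀ a₀ = U.map h₁ a₁

/-- The amalgamation property. -/
def AmalgamationProperty (C : Type u₂) [Category.{u} C] : Prop :=
  ∀ {K L M : C} (f : K ⟶ L) (g : K ⟶ M),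
    ∃ (N : C) (u : L ⟶ N) (v : M ⟶ N), f ≫ u = g ≫ v

/-- The joint embedding property. -/
def JointEmbeddingProperty (C : Type u₂) [Category.{u} C] : Prop :=
  ∀ K L : C, ∃ (N : C) (_ : K ⟶ N) (_ : L ⟶ N), True

/-- `L` is `λ`-saturated: injective w.r.t. morphisms between `λ`-presentable objects. -/
def IsSaturated (κ : Cardinal.{u}) {C : Type u₂} [Category.{u} C] (L : C) : Prop :=
  ∀ {A B : C}, IsPresentable κ A → IsPresentable κ B →
    ∀ (f : A ⟶ L) (g : A ⟶ B), ∃ h : B ⟶ L, g ≫ h = f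

/-- `K` has size `c`: its presentability rank is the successor cardinal `c⁺`. -/
def SizeIs (c : Cardinal.{u}) {C : Type u₂} [Category.{u} C] (K : C) : Prop :=
  IsPresentable (Order.succ c) K ∧ ∀ κ, Cardinal.IsRegular κ → κ ≤ c → ¬ IsPresentable κ K

open FirstOrder FirstOrder.Language

/-- An abstract elementary class in a (finitary) signature `L`: a class of `L`-structures
together with a class of strong substructure embeddings, satisfying the AEC axioms
(closure under isomorphism, coherence, Tarski–Vaught chain axioms and Löwenheim–Skolem). -/
structure AEC (L : FirstOrder.Language.{u, u}) where
  /-- the class of structures -/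
  Obj : ∀ (M : Type u) [L.Structure M], Prop
  /-- the class of strong embeddings -/
  Strong : ∀ (M N : Type u) [L.Structure M] [L.Structure N], (M ↪[L] N) → Prop
  refl_strong : ∀ (M : Type u) [L.Structure M], Obj M → Strong M M (Embedding.refl L M)
  comp_strong : ∀ {M N P : Type u} [L.Structure M] [L.Structure N] [L.Structure P]
      (f : M ↪[L] N) (g : N ↪[L] P), Strong M N f → Strong N P g → Strong M P (g.comp f)
  strong_src : ∀ {M N : Type u} [L.Structure M] [L.Structure N] (f : M ↪[L] N),
      Strong M N f → Obj M ∧ Obj N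
  iso_closed : ∀ {M N : Type u} [L.Structure M] [L.Structure N] (e : M ≃[L] N),
      Obj M → Obj N ∧ Strong M N e.toEmbedding
  coherence : ∀ {M N P : Type u} [L.Structure M] [L.Structure N] [L.Structure P]
      (f : M ↪[L] N) (g : N ↪[L] P), Strong M P (g.comp f) → Strong N P g → Strong M N f
  chain_mem : ∀ (ι : Type u) [Preorder ι] [IsDirected ι (· ≤ ·)] [Nonempty ι]
      (G : ι → Type u) [∀ i, L.Structure (G i)] (f : ∀ i j, i ≤ j → G i ↪[L] G j)
      [DirectedSystem G fun i j h => f i j h],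
      (∀ i, Obj (G i)) → (∀ i j (h : i ≤ j), Strong _ _ (f i j h)) →
      Obj (FirstOrder.Language.DirectLimit G f) ∧ ∀ i, Strong _ _ (FirstOrder.Language.DirectLimit.of L ι G f i)
  chain_smooth : ∀ (ι : Type u) [Preorder ι] [IsDirected ι (· ≤ ·)] [Nonempty ι]
      (G : ι → Type u) [∀ i, L.Structure (G i)] (f : ∀ i j, i ≤ j → G i ↪[L] G j)
      [DirectedSystem G fun i j h => f i j h] (N : Type u) [L.Structure N],
      (∀ i, Obj (G i)) → (∀ i j (h : i ≤ j), Strong _ _ (f i j h)) →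
      ∀ (g : FirstOrder.Language.DirectLimit G f ↪[L] N),
        (∀ i, Strong _ _ (g.comp (FirstOrder.Language.DirectLimit.of L ι G f i))) → Strong _ _ g
  lsNum : Cardinal.{u}
  ls : ∀ (M : Type u) [L.Structure M], Obj M → ∀ S : Set M,
      ∃ N : L.Substructure M, S ⊆ (N : Set M) ∧ Obj N ∧ Strong N M N.subtype ∧
        Cardinal.mk N ≤ lsNum + Cardinal.mk S

variable {L : FirstOrder.Language.{u, u}}

/-- The objects of the category associated to an AEC. -/
structure AECCat (A : AEC L) where
  carrier : Type u
  [str : L.Structure carrier]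
  mem : A.Obj carrier

attribute [instance] AECCat.str

/-- The category of an AEC: morphisms are the strong embeddings. -/
instance AECCat.category (A : AEC L) : Category.{u} (AECCat A) where
  Hom M N := {f : M.carrier ↪[L] N.carrier // A.Strong _ _ f}
  id M := ⟨Embedding.refl L M.carrier, A.refl_strong _ M.mem⟩
  comp f g := ⟨g.1.comp f.1, A.comp_strong _ _ f.2 g.2⟩
  id_comp _ := Subtype.ext (Embedding.ext fun _ => rfl)
  comp_id _ := Subtype.ext (Embedding.ext fun _ => rfl)
  assoc _ _ _ := Subtype.ext (Embedding.ext fun _ => rfl)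

/-- The underlying-set functor of an AEC. -/
def AECforget (A : AEC L) : AECCat A ⥤ Type u where
  obj M := M.carrier
  map f := TypeCat.ofHom f.1
  map_id _ := rfl
  map_comp _ _ := rfl


/-!
Directed colimits in an AEC are direct limits of the underlying structures: the Tarski–Vaught
axioms say precisely that the direct limit of a directed diagram of strong embeddings lies in the
class, that the limit maps are strong, and that the induced map to any cocone is strong. So the
forgetful functor preserves these colimits. Coherence of the forgetful functor is the coherence
axiom, since a map `f` with `g ∘ f = h` for embeddings `g`, `h` is an embedding.

For accessibility take `μ = LS(K) + ℵ₀`. An object of size `≤ μ` is `μ⁺`-presentable: each of its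
elements comes from some stage of a `μ⁺`-directed colimit, all of them from a common stage, and
coherence makes the resulting map into that stage strong. By Löwenheim–Skolem, every object is the
`μ⁺`-directed union of its strong substructures of size `≤ μ`.
-/

namespace IsCardDirected

variable {J : Type u} [Preorder J]

lemma mono {κ κ' : Cardinal.{u}} (h : IsCardDirected κ J) (hle : κ' ≤ κ) :
    IsCardDirected κ' J :=
  fun S hS => h S (hS.trans_le hle)

lemma nonempty (h : IsCardDirected Cardinal.aleph0 J) : Nonempty J :=
  let ⟨b, _⟩ := h ∅ (by simpa using Cardinal.aleph0_pos)
  ⟨b⟩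

lemma isDirected (h : IsCardDirected Cardinal.aleph0 J) : IsDirected J (· ≤ ·) where
  directed a b :=
    let ⟨c, hc⟩ := h {a, b} ((Set.toFinite _).lt_aleph0)
    ⟨c, hc a (by simp), hc b (by simp)⟩

end IsCardDirected

namespace FirstOrder.Language.Embedding

variable {L : Language} {M N P : Type*} [L.Structure M] [L.Structure N] [L.Structure P]

def ofCompEq (g : N ↪[L] P) (h : M ↪[L] P) (f : M → N) (hf : ∀ x, g (f x) = h x) :
    M ↪[L] N where
  toFun := f
  inj' a b hab := h.injective (by rw [← hf, ← hf, hab])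
  map_fun' F x := g.injective <| by
    simp only [Function.comp_def, hf, map_fun]
  map_rel' r x := by
    rw [← g.map_rel, ← h.map_rel]
    simp only [Function.comp_def, hf]

noncomputable def equivOfSurjective (φ : M ↪[L] N) (hφ : Function.Surjective φ) : M ≃[L] N :=
  ⟨Equiv.ofBijective φ ⟨φ.injective, hφ⟩, φ.map_fun', φ.map_rel'⟩

end FirstOrder.Language.Embedding

lemma AEC.strong_inclusion (A : AEC L) {M : Type u} [L.Structure M] {N N' : L.Substructure M}
    (h : N ≤ N') (hN : A.Strong N M N.subtype) (hN' : A.Strong N' M N'.subtype) :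
    A.Strong N N' (Substructure.inclusion h) :=
  A.coherence _ N'.subtype hN hN'

namespace AECCat

variable {A : AEC L}

lemma hom_ext {M N : AECCat A} {f g : M ⟶ N} (h : ∀ x, f.1 x = g.1 x) : f = g :=
  Subtype.ext (Embedding.ext h)

instance : (AECforget A).Faithful where
  map_injective h := hom_ext fun x => ConcreteCategory.congr_hom h x

lemma coherent : Coherent (AECforget A) := by
  intro M N Z h g f hf
  have hgf : ∀ x, g.1 (f x) = h.1 x := fun x => congrFun hf x
  refine ⟨⟨Embedding.ofCompEq g.1 h.1 f hgf, A.coherence _ g.1 ?_ g.2⟩, rfl⟩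
  convert h.2 using 1
  exact Embedding.ext hgf

noncomputable def isoOfSurjective {M N : AECCat A} (φ : M ⟶ N) (hφ : Function.Surjective φ.1) :
    M ≅ N :=
  let e := Embedding.equivOfSurjective φ.1 hφ
  { hom := φ
    inv := ⟨e.symm.toEmbedding, (A.iso_closed e.symm N.mem).2⟩
    hom_inv_id := hom_ext e.symm_apply_apply
    inv_hom_id := hom_ext e.apply_symm_apply }

section DirectedColimit

variable {J : Type u} [Preorder J] (D : J ⥤ AECCat A)

abbrev diagramCarrier (j : J) : Type u := (D.obj j).carrier

def transition (i j : J) (h : i ≤ j) : diagramCarrier D i ↪[L] diagramCarrier D j :=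
  (D.map h.hom).1

instance : DirectedSystem (diagramCarrier D) (fun i j h => transition D i j h) where
  map_self i x := by
    simp only [transition, homOfLE_refl, D.map_id]
    rfl
  map_map {k j i} hij hjk x := by
    simp only [transition, ← homOfLE_comp hij hjk, D.map_comp]
    rfl

lemma cocone_ι_app_transition (s : Cocone D) {i j : J} (hij : i ≤ j) (x : diagramCarrier D i) :
    (s.ι.app j).1 (transition D i j hij x) = (s.ι.app i).1 x :=
  congrArg (fun g : D.obj i ⟶ s.pt => g.1 x) (s.w hij.hom)

variable [IsDirected J (· ≤ ·)] [Nonempty J]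

lemma transition_eq_transition_iff {i j k : J} (hik : i ≤ k) (hjk : j ≤ k)
    {x : diagramCarrier D i} {y : diagramCarrier D j} :
    transition D i k hik x = transition D j k hjk y ↔
      Language.DirectLimit.of L J _ (transition D) i x =
        Language.DirectLimit.of L J _ (transition D) j y := by
  rw [← (Language.DirectLimit.of L J _ (transition D) k).injective.eq_iff,
    Language.DirectLimit.of_f, Language.DirectLimit.of_f]

lemma obj_directLimit_and_strong_of :
    A.Obj (Language.DirectLimit (diagramCarrier D) (transition D)) ∧
      ∀ i, A.Strong _ _ (Language.DirectLimit.of L J _ (transition D) i) :=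
  A.chain_mem J (diagramCarrier D) (transition D) (fun j => (D.obj j).mem)
    (fun _ _ h => (D.map h.hom).2)

noncomputable def colimitCocone : Cocone D where
  pt := ⟨Language.DirectLimit (diagramCarrier D) (transition D),
    (obj_directLimit_and_strong_of D).1⟩
  ι :=
    { app j := ⟨Language.DirectLimit.of L J _ (transition D) j,
        (obj_directLimit_and_strong_of D).2 j⟩
      naturality _ _ h := hom_ext fun _ => Language.DirectLimit.of_f (hij := leOfHom h) }

noncomputable def coconeLift (s : Cocone D) :
    Language.DirectLimit (diagramCarrier D) (transition D) ↪[L] s.pt.carrier :=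
  Language.DirectLimit.lift L J _ (transition D) (fun i => (s.ι.app i).1) fun _ _ hij x =>
    cocone_ι_app_transition D s hij x

lemma coconeLift_of (s : Cocone D) (i : J) (x : diagramCarrier D i) :
    coconeLift D s (Language.DirectLimit.of L J _ (transition D) i x) = (s.ι.app i).1 x :=
  Language.DirectLimit.lift_of _ _ x

lemma strong_coconeLift (s : Cocone D) : A.Strong _ _ (coconeLift D s) :=
  A.chain_smooth J (diagramCarrier D) (transition D) _ (fun j => (D.obj j).mem)
    (fun _ _ h => (D.map h.hom).2) _ fun i => by
      rw [show (coconeLift D s).comp (Language.DirectLimit.of L J _ (transition D) i) =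
        (s.ι.app i).1 from Embedding.ext (coconeLift_of D s i)]
      exact (s.ι.app i).2

noncomputable def colimitCoconeIsColimit : IsColimit (colimitCocone D) where
  desc s := ⟨coconeLift D s, strong_coconeLift D s⟩
  fac s i := hom_ext (coconeLift_of D s i)
  uniq s m hm := hom_ext fun z => by
    obtain ⟨i, x, rfl⟩ := Language.DirectLimit.exists_of (f := transition D) z
    exact (congrArg (fun g : D.obj i ⟶ s.pt => g.1 x) (hm i)).trans
      (coconeLift_of D s i x).symm

noncomputable def isColimitMapCoconeColimitCocone :
    IsColimit ((AECforget A).mapCocone (colimitCocone D)) :=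
  Types.FilteredColimit.isColimitOf _ _
    (fun z =>
      let ⟨i, x, h⟩ := Language.DirectLimit.exists_of (f := transition D) z
      ⟨i, x, h.symm⟩)
    fun i j _ _ h =>
      let ⟨k, hik, hjk⟩ := directed_of (· ≤ ·) i j
      ⟨k, hik.hom, hjk.hom, (transition_eq_transition_iff D hik hjk).2 h⟩

end DirectedColimit

lemma hasDirectedColimits : HasDirectedColimits (AECCat A) := by
  intro J _ hJ
  have := hJ.nonempty
  have := hJ.isDirected
  exact ⟨fun {D} => HasColimit.mk ⟨colimitCocone D, colimitCoconeIsColimit D⟩⟩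

lemma preservesDirectedColimits_forget : PreservesDirectedColimits (AECforget A) := by
  intro J _ hJ
  have := hJ.nonempty
  have := hJ.isDirected
  exact ⟨⟨fun {D} => preservesColimit_of_preserves_colimit_cocone
    (colimitCoconeIsColimit D) (isColimitMapCoconeColimitCocone D)⟩⟩

lemma exists_hom_comp_ι_eq {μ : Cardinal.{u}} {J : Type u} [Preorder J] [IsDirected J (· ≤ ·)]
    [Nonempty J] (hJ : IsCardDirected (Order.succ μ) J) (D : J ⥤ AECCat A) {M : AECCat A}
    (hM : Cardinal.mk M.carrier ≤ μ) (u : M ⟶ (colimitCocone D).pt) :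
    ∃ (k : J) (v : M ⟶ D.obj k), v ≫ (colimitCocone D).ι.app k = u := by
  choose stage x hx using fun a => Language.DirectLimit.exists_of (f := transition D) (u.1 a)
  obtain ⟨k, hk⟩ := hJ (Set.range stage)
    (Cardinal.mk_range_le.trans hM |>.trans_lt (Order.lt_succ μ))
  let v : M.carrier → (D.obj k).carrier := fun a => transition D _ k (hk _ ⟨a, rfl⟩) (x a)
  have hv : ∀ a, ((colimitCocone D).ι.app k).1 (v a) = u.1 a := fun a =>
    Language.DirectLimit.of_f.trans (hx a)
  obtain ⟨vbar, hvbar⟩ := coherent u ((colimitCocone D).ι.app k) v (funext hv)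
  exact ⟨k, vbar, hom_ext fun a => (congrArg _ (congrFun hvbar a)).trans (hv a)⟩

lemma isPresentable_succ_of_mk_le {μ : Cardinal.{u}} (hμ : Cardinal.aleph0 ≤ μ) {M : AECCat A}
    (hM : Cardinal.mk M.carrier ≤ μ) : IsPresentable (Order.succ μ) M := by
  intro J _ hJ
  have hJ₀ : IsCardDirected Cardinal.aleph0 J := hJ.mono (hμ.trans (Order.le_succ μ))
  have := hJ₀.nonempty
  have := hJ₀.isDirected
  refine ⟨⟨fun {D} => preservesColimit_of_preserves_colimit_cocone (colimitCoconeIsColimit D)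
    (Types.FilteredColimit.isColimitOf _ _ (fun u => ?_) fun i j ui uj h => ?_)⟩⟩
  · obtain ⟨k, v, hv⟩ := exists_hom_comp_ι_eq hJ D hM u
    exact ⟨k, v, hv.symm⟩
  · obtain ⟨k, hik, hjk⟩ := directed_of (· ≤ ·) i j
    refine ⟨k, hik.hom, hjk.hom, hom_ext fun a => ?_⟩
    exact (transition_eq_transition_iff D hik hjk).2 (congrArg (fun w => w.1 a) h)

section SmallStrongSubstructure

variable (X : AECCat A) (μ : Cardinal.{u})

abbrev SmallStrongSubstructure : Type u :=
  {N : L.Substructure X.carrier //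
    A.Obj N ∧ A.Strong N X.carrier N.subtype ∧ Cardinal.mk N ≤ μ}

variable {X μ}

lemma exists_smallStrongSubstructure_superset (hls : A.lsNum ≤ μ) (hμ : Cardinal.aleph0 ≤ μ)
    (S : Set X.carrier) (hS : Cardinal.mk S ≤ μ) :
    ∃ N : SmallStrongSubstructure X μ, S ⊆ N.1 := by
  obtain ⟨N, hSN, hobj, hstrong, hcard⟩ := A.ls X.carrier X.mem S
  exact ⟨⟨N, hobj, hstrong,
    hcard.trans ((add_le_add hls hS).trans (Cardinal.add_eq_self hμ).le)⟩, hSN⟩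

lemma isCardDirected_smallStrongSubstructure (hls : A.lsNum ≤ μ) (hμ : Cardinal.aleph0 ≤ μ) :
    IsCardDirected (Order.succ μ) (SmallStrongSubstructure X μ) := by
  intro S hS
  have hunion : Cardinal.mk (⋃ N ∈ S, (N.1 : Set X.carrier)) ≤ μ :=
    (Cardinal.mk_biUnion_le _ _).trans <|
      (mul_le_mul' (Order.lt_succ_iff.mp hS) (ciSup_le' fun N => N.1.2.2.2)).trans
        (Cardinal.mul_eq_self hμ).le
  obtain ⟨N₀, hN₀⟩ := exists_smallStrongSubstructure_superset hls hμ _ hunion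
  exact ⟨N₀, fun N hN x hx => hN₀ (Set.mem_biUnion hN hx)⟩

variable (X μ)

def smallStrongSubstructureDiagram : SmallStrongSubstructure X μ ⥤ AECCat A where
  obj N := ⟨N.1, N.2.1⟩
  map {N N'} h := ⟨Substructure.inclusion (leOfHom h), A.strong_inclusion _ N.2.2.1 N'.2.2.1⟩

def smallStrongSubstructureCocone : Cocone (smallStrongSubstructureDiagram X μ) where
  pt := X
  ι := { app N := ⟨N.1.subtype, N.2.2.1⟩ }

variable {X μ}

lemma surjective_desc_smallStrongSubstructureCocone
    [IsDirected (SmallStrongSubstructure X μ) (· ≤ ·)]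
    [Nonempty (SmallStrongSubstructure X μ)]
    (hls : A.lsNum ≤ μ) (hμ : Cardinal.aleph0 ≤ μ) :
    Function.Surjective ((colimitCoconeIsColimit (smallStrongSubstructureDiagram X μ)).desc
      (smallStrongSubstructureCocone X μ)).1 := by
  intro (x : X.carrier)
  obtain ⟨N, hxN⟩ := exists_smallStrongSubstructure_superset hls hμ {x}
    ((Cardinal.mk_singleton x).trans_le (Cardinal.one_le_aleph0.trans hμ))
  exact ⟨((colimitCocone _).ι.app N).1 ⟨x, hxN rfl⟩,
    congrArg (fun g => g.1 ⟨x, hxN rfl⟩)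
      ((colimitCoconeIsColimit _).fac (smallStrongSubstructureCocone X μ) N)⟩

lemma isAccessible : ∃ κ : Cardinal.{u}, κ.IsRegular ∧ IsAccessible κ (AECCat A) := by
  set μ := A.lsNum + Cardinal.aleph0
  have hμ : Cardinal.aleph0 ≤ μ := le_add_self
  have hls : A.lsNum ≤ μ := le_self_add
  refine ⟨Order.succ μ, Cardinal.isRegular_succ hμ,
    fun J _ hJ => hasDirectedColimits J (hJ.mono (hμ.trans (Order.le_succ μ))),
    {X | Cardinal.mk X.carrier ≤ μ}, fun _ => isPresentable_succ_of_mk_le hμ, fun X => ?_⟩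
  have hdir := isCardDirected_smallStrongSubstructure (X := X) hls hμ
  have hdir₀ := hdir.mono (hμ.trans (Order.le_succ μ))
  have := hdir₀.nonempty
  have := hdir₀.isDirected
  exact ⟨⟨_, hdir, smallStrongSubstructureDiagram X μ, fun N => N.2.2.2, colimitCocone _,
    colimitCoconeIsColimit _,
    isoOfSurjective _ (surjective_desc_smallStrongSubstructureCocone hls hμ)⟩⟩

end SmallStrongSubstructure

end AECCat

/-- Any abstract elementary class, regarded as a category with strong substructure embeddings
as morphisms together with the underlying-set functor, is a coherent accessible category with
concrete directed colimits. -/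
theorem stmt5 (L : FirstOrder.Language.{u, u}) (A : AEC L) :
    (AECforget A).Faithful ∧
    PreservesDirectedColimits (AECforget A) ∧
    Coherent (AECforget A) ∧
    HasDirectedColimits (AECCat A) ∧
    ∃ κ : Cardinal.{u}, κ.IsRegular ∧ IsAccessible κ (AECCat A) :=
  ⟨inferInstance, AECCat.preservesDirectedColimits_forget, AECCat.coherent,
    AECCat.hasDirectedColimits, AECCat.isAccessible⟩
end

section
/- If the faithful directed-colimit-preserving functor U : K → Set of an accessible category with concrete directed colimits is coherent, then the pullback category K₀ of K along the inclusion Emb(Set) → Set (sets with injective maps) is again coherent, and its morphisms are monomorphisms preserved by the induced functor U₀. -/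
open CategoryTheory Limits Opposite

universe u u₂ u₃

/-- The pullback `K₀` of `U : K ⥤ Set` along the inclusion `Emb(Set) → Set`: same objects,
but only the morphisms whose image under `U` is injective. -/
def EmbPullback {C : Type u₂} [Category.{u} C] (U : C ⥤ Type u) := C

instance EmbPullback.category {C : Type u₂} [Category.{u} C] (U : C ⥤ Type u) :
    Category.{u} (EmbPullback U) where
  Hom A B := {f : (show C from A) ⟶ (show C from B) // Function.Injective (U.map f)}
  id A := ⟨𝟙 (show C from A), fun x y h => (FunctorToTypes.map_id_apply U x).symm.trans (h.trans (FunctorToTypes.map_id_apply U y))⟩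
  comp f g := ⟨f.1 ≫ g.1, by rw [U.map_comp]; exact fun x y h => f.2 (g.2 h)⟩
  id_comp f := Subtype.ext (Category.id_comp (obj := C) _)
  comp_id f := Subtype.ext (Category.comp_id (obj := C) _)
  assoc f g h := Subtype.ext (Category.assoc (obj := C) _ _ _)

/-- The induced concrete functor `U₀` on the pullback category. -/
def EmbPullback.U₀ {C : Type u₂} [Category.{u} C] (U : C ⥤ Type u) :
    EmbPullback U ⥤ Type u where
  obj A := U.obj (show C from A)
  map f := U.map f.1
  map_id _ := U.map_id _
  map_comp _ _ := U.map_comp _ _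

namespace EmbPullback

variable {C : Type u₂} [Category.{u} C] {U : C ⥤ Type u}

theorem injective_U₀_map {A B : EmbPullback U} (f : A ⟶ B) :
    Function.Injective ((U₀ U).map f) :=
  f.2

theorem coherent_U₀ (hcoh : Coherent U) : Coherent (U₀ U) := by
  intro A B Z h g f hgf
  obtain ⟨fbar, hfbar⟩ := hcoh h.1 g.1 f hgf
  -- `U.map g ∘ f = U.map h` is injective, hence so is `f`.
  have hf : Function.Injective f := Function.Injective.of_comp (hgf ▸ h.2)
  exact ⟨⟨fbar, hfbar ▸ hf⟩, hfbar⟩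

instance faithful_U₀ [U.Faithful] : (U₀ U).Faithful where
  map_injective {_ _} _ _ h := Subtype.ext (U.map_injective h)

theorem mono_of_faithful [U.Faithful] {A B : EmbPullback U} (f : A ⟶ B) : Mono f :=
  (U₀ U).mono_of_mono_map ((mono_iff_injective _).2 (injective_U₀_map f))

end EmbPullback

theorem stmt6_general (C : Type u₂) [Category.{u} C]
    (U : C ⥤ Type u) (hfaith : U.Faithful)
    (hcoh : Coherent U) :
    Coherent (EmbPullback.U₀ U) ∧
    ∀ {A B : EmbPullback U} (f : A ⟶ B),
      Mono f ∧ Function.Injective ((EmbPullback.U₀ U).map f) :=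
  ⟨EmbPullback.coherent_U₀ hcoh,
    fun f => ⟨EmbPullback.mono_of_faithful f, EmbPullback.injective_U₀_map f⟩⟩

/-- If `U` is coherent, then the pullback category `K₀` of `K` along `Emb(Set) → Set` is again
coherent, and all its morphisms are monomorphisms preserved by `U₀`. -/
theorem stmt6 (C : Type u₂) [Category.{u} C] (κ : Cardinal.{u}) (hκ : κ.IsRegular)
    (hacc : IsAccessible κ C) (hdir : HasDirectedColimits C)
    (U : C ⥤ Type u) (hfaith : U.Faithful) (hU : PreservesDirectedColimits U)
    (hcoh : Coherent U) :
    Coherent (EmbPullback.U₀ U) ∧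
    ∀ {A B : EmbPullback U} (f : A ⟶ B),
      Mono f ∧ Function.Injective ((EmbPullback.U₀ U).map f) :=
  stmt6_general C U hfaith hcoh
end

section
/- Let K be an accessible category with directed colimits. A λ⁺-directed colimit of λ-saturated objects is λ-saturated. -/
open CategoryTheory Limits Opposite

universe u u₂ u₃

/-!
A map `f : A ⟶ colim D` from a `λ`-presentable `A` factors through some `D j`, because a
`λ⁺`-directed poset is in particular `λ`-directed. Saturation of `D j` extends the factor along
`g : A ⟶ B`, and composing with the colimit injection extends `f`.
-/

theorem IsCardDirected.mono_s11 {κ κ' : Cardinal.{u}} {J : Type u} [Preorder J] (h : κ ≤ κ')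
    (hJ : IsCardDirected κ' J) : IsCardDirected κ J :=
  fun S hS => hJ S (hS.trans_le h)

theorem IsPresentable.exists_fac_of_isColimit {κ : Cardinal.{u}} {C : Type u₂} [Category.{u} C]
    {A : C} (hA : IsPresentable κ A) {J : Type u} [Preorder J] (hJ : IsCardDirected κ J)
    {D : J ⥤ C} {c : Cocone D} (hc : IsColimit c) (f : A ⟶ c.pt) :
    ∃ (j : J) (f' : A ⟶ D.obj j), f' ≫ c.ι.app j = f := by
  obtain ⟨_⟩ := hA J hJ
  exact Types.jointly_surjective _ (isColimitOfPreserves (coyoneda.obj (op A)) hc) f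

theorem IsSaturated.of_isColimit {κ : Cardinal.{u}} {C : Type u₂} [Category.{u} C]
    {J : Type u} [Preorder J] (hJ : IsCardDirected κ J) {D : J ⥤ C}
    (hsat : ∀ j, IsSaturated κ (D.obj j)) {c : Cocone D} (hc : IsColimit c) :
    IsSaturated κ c.pt := by
  intro A B hA hB f g
  obtain ⟨j, f', rfl⟩ := hA.exists_fac_of_isColimit hJ hc f
  obtain ⟨h, hh⟩ := hsat j hA hB f' g
  exact ⟨h ≫ c.ι.app j, by rw [← Category.assoc, hh]⟩

theorem stmt11_general (C : Type u₂) [Category.{u} C]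
    (lam : Cardinal.{u})
    (J : Type u) [Preorder J] (hJ : IsCardDirected (Order.succ lam) J)
    (D : J ⥤ C) (hsat : ∀ j, IsSaturated lam (D.obj j))
    (c : Cocone D) (hc : IsColimit c) :
    IsSaturated lam c.pt :=
  IsSaturated.of_isColimit (hJ.mono_s11 (Order.le_succ lam)) hsat hc

/-- In an accessible category with directed colimits, a `λ⁺`-directed colimit of `λ`-saturated
objects is `λ`-saturated. -/
theorem stmt11 (C : Type u₂) [Category.{u} C] (κ : Cardinal.{u}) (hκ : κ.IsRegular)
    (hacc : IsAccessible κ C) (hdir : HasDirectedColimits C)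
    (lam : Cardinal.{u}) (hlam : lam.IsRegular)
    (J : Type u) [Preorder J] (hJ : IsCardDirected (Order.succ lam) J)
    (D : J ⥤ C) (hsat : ∀ j, IsSaturated lam (D.obj j))
    (c : Cocone D) (hc : IsColimit c) :
    IsSaturated lam c.pt :=
  stmt11_general C lam J hJ D hsat c hc
end
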